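/- In the ear setup, let α ∈ U₁ and β ∈ U₂, let K be a semifield and f : diag(P) → K any map. Then the map R defined by R(α,ζ,π₃,…,π_p) = (η,ζ,π₃,…,π_p) is a bijection from {π ∈ T(α→β) : π₂ = ζ and π₃ ≠ η} to {ρ ∈ T(η→β) : ρ₂ = ζ}, and every π in its domain satisfies (f(α,ζ)/f(η,ζ)) · f(R(π)) = f(π). -/

import Mathlib

/-!
Common definitions: polygons with vertex set `ZMod n`, crossing of diagonals,
dissections, (weak) friezes with values in a semifield, and T-paths.
-/

/-- A *semifield* in the sense of the paper: a set `K` with a commutative, associative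
addition and a multiplication making `K` a commutative group, such that multiplication
distributes over addition.  (There is no zero and no subtraction.) -/
class PaperSemifield (K : Type*) extends CommGroup K, AddCommSemigroup K where
  mul_add' : ∀ a b c : K, a * (b + c) = a * b + a * c

/-- Position of the vertex `x` of the `n`-gon relative to the vertex `a`, going around
the polygon in the positive direction; `relPos n a x = 0` iff `x = a`. -/
def relPos (n : ℕ) (a x : ZMod n) : ℕ := (x - a).val

/-- The vertices `a, b, c, d` of the `n`-gon appear strictly in this cyclic order. -/
def CyclicallyOrdered (n : ℕ) (a b c d : ZMod n) : Prop :=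
  0 < relPos n a b ∧ relPos n a b < relPos n a c ∧ relPos n a c < relPos n a d

/-- The diagonals `{a,b}` and `{c,d}` of the `n`-gon *cross*: the four vertices are
distinct and appear in the cyclic order `a, c, b, d` or `a, d, b, c`. -/
def Crosses (n : ℕ) (a b c d : ZMod n) : Prop :=
  CyclicallyOrdered n a c b d ∨ CyclicallyOrdered n a d b c

/-- `{a, b}` is an edge of the `n`-gon, i.e. joins neighbouring vertices. -/
def IsEdge (n : ℕ) (a b : ZMod n) : Prop := b = a + 1 ∨ a = b + 1

/-- `{a, b}` is an internal diagonal of the `n`-gon. -/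
def IsInternalDiag (n : ℕ) (a b : ZMod n) : Prop := a ≠ b ∧ ¬ IsEdge n a b

/-- `w'` is the successor of `w` in the induced cyclic order of the subpolygon of the
`n`-gon with vertex set `W`. -/
def NextIn (n : ℕ) (W : Set (ZMod n)) (w w' : ZMod n) : Prop :=
  w ∈ W ∧ w' ∈ W ∧ w' ≠ w ∧ ∀ u ∈ W, relPos n w u = 0 ∨ relPos n w w' ≤ relPos n w u

/-- `D` is a dissection of the subpolygon of the `n`-gon with vertex set `W`: a set of
pairwise non-crossing diagonals of the subpolygon joining non-neighbouring vertices. -/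
def IsDissectionOf (n : ℕ) (W : Set (ZMod n)) (D : Set (Sym2 (ZMod n))) : Prop :=
  (∀ a b, s(a, b) ∈ D → a ∈ W ∧ b ∈ W ∧ a ≠ b ∧ ¬ NextIn n W a b ∧ ¬ NextIn n W b a) ∧
  (∀ a b c d, s(a, b) ∈ D → s(c, d) ∈ D → ¬ Crosses n a b c d)

/-- `D` is a dissection of the `n`-gon. -/
def IsDissection (n : ℕ) (D : Set (Sym2 (ZMod n))) : Prop :=
  IsDissectionOf n Set.univ D

/-- `f` is symmetric on pairs of vertices from `W`, i.e. represents a map defined on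
unordered diagonals of the subpolygon with vertex set `W`. -/
def SymmOn (n : ℕ) {K : Type*} (W : Set (ZMod n)) (f : ZMod n → ZMod n → K) : Prop :=
  ∀ a b, a ∈ W → b ∈ W → f a b = f b a

/-- The Ptolemy relation for `f` at the crossing diagonals `{a,b}` and `{c,d}`. -/
def PtolemyRel {n : ℕ} {K : Type*} [Mul K] [Add K]
    (f : ZMod n → ZMod n → K) (a b c d : ZMod n) : Prop :=
  f a b * f c d = f a c * f b d + f a d * f b c

/-- `f` is a weak frieze on the subpolygon with vertex set `W` with respect to `D`:
the Ptolemy relation holds whenever `{a,b}` and `{c,d}` are crossing diagonals of the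
subpolygon with `{c,d} ∈ D`. -/
def IsWeakFriezeOn (n : ℕ) {K : Type*} [Mul K] [Add K] (W : Set (ZMod n))
    (D : Set (Sym2 (ZMod n))) (f : ZMod n → ZMod n → K) : Prop :=
  ∀ a b c d : ZMod n, a ∈ W → b ∈ W → c ∈ W → d ∈ W →
    Crosses n a b c d → s(c, d) ∈ D → PtolemyRel f a b c d

/-- `f` is a weak frieze on the `n`-gon with respect to the dissection `D`. -/
def IsWeakFrieze (n : ℕ) {K : Type*} [Mul K] [Add K]
    (D : Set (Sym2 (ZMod n))) (f : ZMod n → ZMod n → K) : Prop :=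
  IsWeakFriezeOn n Set.univ D f

/-- `f` is a frieze on the subpolygon with vertex set `W`: the Ptolemy relation holds
for all crossing diagonals of the subpolygon. -/
def IsFriezeOn (n : ℕ) {K : Type*} [Mul K] [Add K] (W : Set (ZMod n))
    (f : ZMod n → ZMod n → K) : Prop :=
  ∀ a b c d : ZMod n, a ∈ W → b ∈ W → c ∈ W → d ∈ W →
    Crosses n a b c d → PtolemyRel f a b c d

/-- `f` is a frieze on the `n`-gon. -/
def IsFrieze (n : ℕ) {K : Type*} [Mul K] [Add K] (f : ZMod n → ZMod n → K) : Prop :=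
  IsFriezeOn n Set.univ f

/-- The vertices of the `n`-gon realised as a regular convex `n`-gon in the Euclidean
plane. -/
noncomputable def vtx (n : ℕ) (a : ZMod n) : ℝ × ℝ :=
  (Real.cos (2 * Real.pi * (a.val : ℝ) / n), Real.sin (2 * Real.pi * (a.val : ℝ) / n))

/-- The point with parameter `t` on the segment from `A` to `B`. -/
def segPt (A B : ℝ × ℝ) (t : ℝ) : ℝ × ℝ :=
  ((1 - t) * A.1 + t * B.1, (1 - t) * A.2 + t * B.2)

/-- In the regular realisation of the `n`-gon, the diagonal `{c,d}` crosses the diagonal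
`{a,b}` at the interior point with parameter `t` along the segment from `a` to `b`. -/
def CrossesAt (n : ℕ) (a b c d : ZMod n) (t : ℝ) : Prop :=
  0 < t ∧ t < 1 ∧ ∃ s : ℝ, 0 < s ∧ s < 1 ∧
    segPt (vtx n a) (vtx n b) t = segPt (vtx n c) (vtx n d) s

/-- `l` is a T-path from `a` to `b` with respect to `D` in the subpolygon of the `n`-gon
with vertex set `W`.  Writing `p = l.length` and `π_i = l.getD (i-1) 0` (so the paper's
`π_1, …, π_p` are the entries of `l`), the conditions are: the path starts at `a` and
ends at `b`, uses vertices of `W`; (i) the consecutive pairs are pairwise different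
diagonals; (ii) no step crosses a diagonal in `D`; (iii) the steps starting at an
even position (in the paper's 1-based numbering) are diagonals in `D` which cross the
diagonal `{a,b}` at pairwise different points progressing monotonically in the
direction from `a` to `b`. -/
def IsTPathOn (n : ℕ) (W : Set (ZMod n)) (D : Set (Sym2 (ZMod n))) (a b : ZMod n)
    (l : List (ZMod n)) : Prop :=
  2 ≤ l.length ∧
  l.getD 0 0 = a ∧
  l.getD (l.length - 1) 0 = b ∧
  (∀ i, i < l.length → l.getD i 0 ∈ W) ∧
  (∀ i, i + 1 < l.length → l.getD i 0 ≠ l.getD (i + 1) 0) ∧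
  (∀ i j, i < j → j + 1 < l.length →
    s(l.getD i 0, l.getD (i + 1) 0) ≠ s(l.getD j 0, l.getD (j + 1) 0)) ∧
  (∀ i, i + 1 < l.length → ∀ c d, s(c, d) ∈ D →
    ¬ Crosses n (l.getD i 0) (l.getD (i + 1) 0) c d) ∧
  (∀ i, Odd i → i + 1 < l.length → s(l.getD i 0, l.getD (i + 1) 0) ∈ D) ∧
  (∃ t : ℕ → ℝ,
    (∀ i, Odd i → i + 1 < l.length → CrossesAt n a b (l.getD i 0) (l.getD (i + 1) 0) (t i)) ∧
    (∀ i j, Odd i → Odd j → i < j → j + 1 < l.length → t i < t j))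

/-- `l` is a T-path from `a` to `b` with respect to `D` in the `n`-gon. -/
def IsTPath (n : ℕ) (D : Set (Sym2 (ZMod n))) (a b : ZMod n) (l : List (ZMod n)) : Prop :=
  IsTPathOn n Set.univ D a b l

open Classical in
/-- The (finite) set of all T-paths from `a` to `b` with respect to `D` in the
subpolygon with vertex set `W`.  (Any T-path has pairwise different steps, hence has
length at most `n * n + 1`, so this finite set contains all of them.) -/
noncomputable def TPathFinsetOn (n : ℕ) [NeZero n] (W : Set (ZMod n))
    (D : Set (Sym2 (ZMod n))) (a b : ZMod n) : Finset (List (ZMod n)) :=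
  ((Finset.range (n * n + 2)).biUnion fun k =>
    (Finset.univ : Finset (Fin k → ZMod n)).image List.ofFn).filter (IsTPathOn n W D a b)

/-- The (finite) set of all T-paths from `a` to `b` with respect to `D` in the `n`-gon. -/
noncomputable def TPathFinset (n : ℕ) [NeZero n] (D : Set (Sym2 (ZMod n))) (a b : ZMod n) :
    Finset (List (ZMod n)) :=
  TPathFinsetOn n Set.univ D a b

/-- The weight `f(π)` of a T-path `l`: the product of the values of `f` on the steps at
odd positions (1-based) divided by the product of the values on the steps at even
positions. -/
def pathWeight (n : ℕ) {K : Type*} [CommGroup K] (f : ZMod n → ZMod n → K)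
    (l : List (ZMod n)) : K :=
  (∏ i ∈ (Finset.range (l.length - 1)).filter (fun i => Even i),
      f (l.getD i 0) (l.getD (i + 1) 0)) /
  (∏ i ∈ (Finset.range (l.length - 1)).filter (fun i => Odd i),
      f (l.getD i 0) (l.getD (i + 1) 0))

/-- `f` satisfies the T-path formula with respect to `D` on the subpolygon with vertex
set `W`: for all vertices `a ≠ b` of the subpolygon, `f a b` is the sum of the weights
of all T-paths from `a` to `b`.  Since the semifield `K` has no zero element, the sum is
computed in `WithZero K` (the sum is in fact always a sum of a nonempty collection). -/
def SatisfiesTPathFormulaOn (n : ℕ) [NeZero n] {K : Type*} [PaperSemifield K]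
    (W : Set (ZMod n)) (D : Set (Sym2 (ZMod n))) (f : ZMod n → ZMod n → K) : Prop :=
  ∀ a b : ZMod n, a ∈ W → b ∈ W → a ≠ b →
    WithZero.coe (f a b) = ∑ l ∈ TPathFinsetOn n W D a b, WithZero.coe (pathWeight n f l)

/-- `f` satisfies the T-path formula with respect to `D` on the `n`-gon. -/
def SatisfiesTPathFormula (n : ℕ) [NeZero n] {K : Type*} [PaperSemifield K]
    (D : Set (Sym2 (ZMod n))) (f : ZMod n → ZMod n → K) : Prop :=
  SatisfiesTPathFormulaOn n Set.univ D f

/-- `W` is the vertex set of one of the subpolygons into which the pairwise non-crossing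
internal diagonals `E` divide the `n`-gon: `W` has at least three vertices, consecutive
vertices of `W` are joined by an edge of the polygon or by a diagonal in `E`, and no
diagonal in `E` cuts through `W`. -/
def IsCell (n : ℕ) (E : Set (Sym2 (ZMod n))) (W : Set (ZMod n)) : Prop :=
  3 ≤ W.ncard ∧
  (∀ w w', NextIn n W w w' → (w' = w + 1 ∨ s(w, w') ∈ E)) ∧
  (∀ c d, s(c, d) ∈ E → c ∈ W → d ∈ W → (NextIn n W c d ∨ NextIn n W d c))

/-!
Seen from `η`, every D-step `{x, y}` of a T-path to `β` that starts at a vertex of `P₁` other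
than `ζ`, goes to `ζ` and does not return to `η` has one end strictly between `η` and `β` and
the other after `β`, at most at `ζ`: the first D-step `{ζ, c}` has this shape, a D-step at `η`
would cross `{ζ, c}`, and a later D-step `{ζ, η}` would be met before `{ζ, c}`. Such a D-step
crosses `{q, β}` for every start `q ∈ V₁ \ {ζ}`, and the order in which `{q, β}` meets two
non-crossing D-steps only depends on the side of one on which the other lies, not on `q`.
So the first vertex of these T-paths can be exchanged between `α` and `η`, and the weight only
changes in its first factor.
-/

section RelPos

variable {n : ℕ}

@[simp] lemma relPos_self (a : ZMod n) : relPos n a a = 0 := by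
  simp [relPos]

lemma relPos_eq_zero_iff {a x : ZMod n} : relPos n a x = 0 ↔ x = a := by
  rw [relPos, ZMod.val_eq_zero, sub_eq_zero]

lemma relPos_pos {a x : ZMod n} (h : x ≠ a) : 0 < relPos n a x :=
  Nat.pos_of_ne_zero (mt relPos_eq_zero_iff.mp h)

lemma ne_of_relPos_ne {o x y : ZMod n} (h : relPos n o x ≠ relPos n o y) : x ≠ y :=
  fun hxy => h (congrArg _ hxy)

variable [NeZero n]

lemma relPos_lt (a x : ZMod n) : relPos n a x < n := ZMod.val_lt _

lemma relPos_injective (a : ZMod n) : Function.Injective (relPos n a) := fun _ _ h =>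
  sub_left_injective (ZMod.val_injective n h)

lemma relPos_base (o a x : ZMod n) :
    relPos n o a ≤ relPos n o x ∧ relPos n o a + relPos n a x = relPos n o x ∨
    relPos n o x < relPos n o a ∧ relPos n o a + relPos n a x = n + relPos n o x := by
  have hsum : relPos n o x = (relPos n a x + relPos n o a) % n := by
    rw [relPos, relPos, relPos, ← ZMod.val_add, sub_add_sub_cancel]
  have := relPos_lt a x
  have := relPos_lt o a
  rcases Nat.lt_or_ge (relPos n a x + relPos n o a) n with h | h
  · rw [Nat.mod_eq_of_lt h] at hsum
    omega
  · rw [Nat.mod_eq_sub_mod h, Nat.mod_eq_of_lt (by omega)] at hsum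
    omega

lemma relPos_lt_of_between {a b x : ZMod n} (h0 : 0 < relPos n a x)
    (h : relPos n a x < relPos n a b) : relPos n b a < relPos n b x := by
  have := relPos_base a b x
  have := relPos_base a b a
  simp only [relPos_self] at *
  omega

end RelPos

section CyclicOrder

variable {n : ℕ}

lemma Crosses.ne_fst {a b c d : ZMod n} (h : Crosses n a b c d) : c ≠ a ∧ d ≠ a := by
  have hne : ∀ {x y z w : ZMod n}, CyclicallyOrdered n x y z w → y ≠ x ∧ w ≠ x :=
    fun ⟨h1, h2, h3⟩ => ⟨fun h => by simp [h] at h1, fun h => by simp [h] at h1 h2 h3⟩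
  rcases h with h | h
  · exact hne h
  · exact (hne h).symm

variable [NeZero n]

lemma cyclicallyOrdered_of_lt (o : ZMod n) {a b c d : ZMod n}
    (hab : relPos n o a < relPos n o b) (hbc : relPos n o b < relPos n o c)
    (hcd : relPos n o c < relPos n o d) : CyclicallyOrdered n a b c d := by
  have := relPos_base o a b
  have := relPos_base o a c
  have := relPos_base o a d
  unfold CyclicallyOrdered
  omega

lemma CyclicallyOrdered.rotate {a b c d : ZMod n} (h : CyclicallyOrdered n a b c d) :
    CyclicallyOrdered n b c d a := by
  obtain ⟨h1, h2, h3⟩ := h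
  have := relPos_base a b c
  have := relPos_base a b d
  have := relPos_base a b a
  have := relPos_lt a d
  unfold CyclicallyOrdered
  simp only [relPos_self] at *
  omega

lemma Crosses.symm {a b c d : ZMod n} (h : Crosses n a b c d) : Crosses n b a c d :=
  h.elim (fun h => Or.inr h.rotate.rotate) (fun h => Or.inl h.rotate.rotate)

lemma Crosses.relPos_between (o : ZMod n) {a b c d : ZMod n} (h : Crosses n a b c d)
    (hab : relPos n o a < relPos n o b) :
    relPos n o a < relPos n o c ∧ relPos n o c < relPos n o b ∧
        (relPos n o d < relPos n o a ∨ relPos n o b < relPos n o d) ∨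
      relPos n o a < relPos n o d ∧ relPos n o d < relPos n o b ∧
        (relPos n o c < relPos n o a ∨ relPos n o b < relPos n o c) := by
  have := relPos_base o a b
  have := relPos_base o a c
  have := relPos_base o a d
  have := relPos_lt o b
  have := relPos_lt o c
  have := relPos_lt o d
  unfold Crosses CyclicallyOrdered at h
  omega

end CyclicOrder

section Plane

open Real

/-- Twice the signed area of the triangle `A B C`: positive iff `A, B, C` run
counterclockwise. -/
def orient (A B C : ℝ × ℝ) : ℝ := (B.1 - A.1) * (C.2 - A.2) - (B.2 - A.2) * (C.1 - A.1)

lemma orient_self₁₂ (A C : ℝ × ℝ) : orient A A C = 0 := by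
  simp [orient]

lemma orient_self₁₃ (A B : ℝ × ℝ) : orient A B A = 0 := by
  simp [orient]

lemma orient_self₂₃ (A B : ℝ × ℝ) : orient A B B = 0 := by
  simp only [orient]; ring

lemma orient_swap (A B C : ℝ × ℝ) : orient A C B = -orient A B C := by
  simp only [orient]; ring

lemma orient_rotate (A B C : ℝ × ℝ) : orient B C A = orient A B C := by
  simp only [orient]; ring

lemma orient_segPt (A B C D : ℝ × ℝ) (t : ℝ) :
    orient A B (segPt C D t) = (1 - t) * orient A B C + t * orient A B D := by
  simp only [orient, segPt]; ring

lemma orient_segPt_self (A B : ℝ × ℝ) (t : ℝ) : orient A B (segPt A B t) = 0 := by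
  rw [orient_segPt, orient_self₁₃, orient_self₂₃]; ring

lemma orient_segPt_sub (A B P Q : ℝ × ℝ) (t t' : ℝ) :
    orient A B (segPt P Q t) - orient A B (segPt P Q t') =
      (t' - t) * (orient A B P - orient A B Q) := by
  rw [orient_segPt, orient_segPt]; ring

lemma sin_add_sin_sub_sin_add (X Y : ℝ) :
    sin X + sin Y - sin (X + Y) = 4 * sin (X / 2) * sin (Y / 2) * sin ((X + Y) / 2) := by
  have hX : X = X / 2 + X / 2 := by ring
  have hY : Y = Y / 2 + Y / 2 := by ring
  have hXY : (X + Y) / 2 = X / 2 + Y / 2 := by ring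
  rw [hXY]
  conv_lhs => rw [hX, hY, show X / 2 + X / 2 + (Y / 2 + Y / 2) =
    (X / 2 + Y / 2) + (X / 2 + Y / 2) by ring]
  simp only [sin_add, cos_add]
  linear_combination (-2 * sin (X / 2) * cos (X / 2)) * sin_sq_add_cos_sq (Y / 2)
    + (-2 * sin (Y / 2) * cos (Y / 2)) * sin_sq_add_cos_sq (X / 2)

variable {n : ℕ} [NeZero n]

lemma sin_angle_sub {a b : ZMod n} {m : ℤ} (h : (m : ZMod n) = b - a) :
    sin (2 * π * b.val / n - 2 * π * a.val / n) = sin (2 * π * m / n) := by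
  have hdvd : (n : ℤ) ∣ (b.val : ℤ) - a.val - m := by
    rw [← ZMod.intCast_zmod_eq_zero_iff_dvd]
    push_cast
    simp [h]
  obtain ⟨k, hk⟩ := hdvd
  have hn : (n : ℝ) ≠ 0 := Nat.cast_ne_zero.mpr (NeZero.ne n)
  have hkR : (b.val : ℝ) - a.val = m + n * k := by
    have := congrArg (fun z : ℤ => (z : ℝ)) hk
    push_cast at this
    linarith
  rw [show 2 * π * b.val / n - 2 * π * a.val / n = 2 * π * m / n + k * (2 * π) by
    rw [← sub_div, ← mul_sub, hkR]; field_simp, sin_add_int_mul_two_pi]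

lemma orient_vtx (a b c : ZMod n) :
    orient (vtx n a) (vtx n b) (vtx n c) =
      4 * sin (π * relPos n a b / n) * sin (π * ((relPos n a c : ℝ) - relPos n a b) / n) *
        sin (π * relPos n a c / n) := by
  set θ : ZMod n → ℝ := fun x => 2 * π * x.val / n with hθ
  have hsum : orient (vtx n a) (vtx n b) (vtx n c) =
      sin (θ b - θ a) + sin (θ c - θ b) + sin (θ a - θ c) := by
    simp only [orient, vtx, hθ, sin_sub]; ring
  have e1 : sin (θ b - θ a) = sin (2 * π * (relPos n a b : ℤ) / n) :=
    sin_angle_sub (by simp [relPos])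
  have e2 : sin (θ c - θ b) =
      sin (2 * π * ((relPos n a c : ℤ) - relPos n a b : ℤ) / n) :=
    sin_angle_sub (by simp [relPos])
  have e3 : sin (θ a - θ c) = sin (2 * π * (-(relPos n a c : ℤ) : ℤ) / n) :=
    sin_angle_sub (by simp [relPos])
  rw [hsum, e1, e2, e3]
  have key := sin_add_sin_sub_sin_add (2 * π * relPos n a b / n)
    (2 * π * ((relPos n a c : ℝ) - relPos n a b) / n)
  push_cast
  rw [show 2 * π * -(relPos n a c : ℝ) / n = -(2 * π * relPos n a b / n +
    2 * π * ((relPos n a c : ℝ) - relPos n a b) / n) by ring, sin_neg, ← sub_eq_add_neg, key]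
  ring_nf

lemma sin_pi_mul_div_pos {k : ℝ} (h0 : 0 < k) (hk : k < n) : 0 < sin (π * k / n) := by
  have hn : (0 : ℝ) < n := by exact_mod_cast NeZero.pos n
  apply sin_pos_of_pos_of_lt_pi (by positivity)
  rw [div_lt_iff₀ hn]
  nlinarith [pi_pos]

lemma orient_vtx_pos {a b c : ZMod n} (hb : 0 < relPos n a b)
    (hbc : relPos n a b < relPos n a c) : 0 < orient (vtx n a) (vtx n b) (vtx n c) := by
  have hc : (relPos n a c : ℝ) < n := by exact_mod_cast relPos_lt a c
  have hb' : (0 : ℝ) < relPos n a b := by exact_mod_cast hb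
  have hbc' : (relPos n a b : ℝ) < relPos n a c := by exact_mod_cast hbc
  rw [orient_vtx]
  have := sin_pi_mul_div_pos hb' (hbc'.trans hc)
  have := sin_pi_mul_div_pos (sub_pos.mpr hbc') (by linarith)
  have := sin_pi_mul_div_pos (hb'.trans hbc') hc
  positivity

lemma orient_vtx_neg {a b c : ZMod n} (hc : 0 < relPos n a c)
    (hcb : relPos n a c < relPos n a b) : orient (vtx n a) (vtx n b) (vtx n c) < 0 := by
  rw [← neg_pos, ← orient_swap]
  exact orient_vtx_pos hc hcb

lemma orient_vtx_nonneg {a b c : ZMod n} (h : relPos n a b ≤ relPos n a c) :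
    0 ≤ orient (vtx n a) (vtx n b) (vtx n c) := by
  rcases eq_or_ne b a with rfl | hb
  · rw [orient_self₁₂]
  rcases h.eq_or_lt with h | h
  · rw [relPos_injective a h, orient_self₂₃]
  · exact (orient_vtx_pos (relPos_pos hb) h).le

lemma orient_vtx_nonpos {a b c : ZMod n} (h : relPos n a c ≤ relPos n a b) :
    orient (vtx n a) (vtx n b) (vtx n c) ≤ 0 := by
  rw [← neg_nonneg, ← orient_swap]
  exact orient_vtx_nonneg h

lemma orient_vtx_pos_iff {a b c : ZMod n} :
    0 < orient (vtx n a) (vtx n b) (vtx n c) ↔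
      0 < relPos n a b ∧ relPos n a b < relPos n a c := by
  refine ⟨fun h => ?_, fun h => orient_vtx_pos h.1 h.2⟩
  by_contra hne
  rcases Nat.eq_zero_or_pos (relPos n a b) with hb | hb
  · rw [relPos_eq_zero_iff.mp hb, orient_self₁₂] at h
    exact h.false
  · exact (orient_vtx_nonpos (not_lt.mp fun hbc => hne ⟨hb, hbc⟩)).not_gt h

lemma orient_vtx_neg_iff {a b c : ZMod n} :
    orient (vtx n a) (vtx n b) (vtx n c) < 0 ↔
      0 < relPos n a c ∧ relPos n a c < relPos n a b := by
  rw [← neg_pos, ← orient_swap, orient_vtx_pos_iff]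

lemma orient_vtx_ne_zero {a b c : ZMod n} (hb : b ≠ a) (hc : c ≠ a) (hbc : b ≠ c) :
    orient (vtx n a) (vtx n b) (vtx n c) ≠ 0 := by
  rcases lt_or_gt_of_ne (mt (relPos_injective a ·) hbc) with h | h
  · exact (orient_vtx_pos (relPos_pos hb) h).ne'
  · exact (orient_vtx_neg (relPos_pos hc) h).ne

lemma orient_vtx_pos_of_lt (o : ZMod n) {a b c : ZMod n} (hab : relPos n o a < relPos n o b)
    (hbc : relPos n o b < relPos n o c) : 0 < orient (vtx n a) (vtx n b) (vtx n c) := by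
  have := relPos_base o a b
  have := relPos_base o a c
  exact orient_vtx_pos (by omega) (by omega)

end Plane

section Crossing

variable {n : ℕ}

lemma CrossesAt.swap {a b c d : ZMod n} {t : ℝ} (h : CrossesAt n a b c d t) :
    CrossesAt n a b d c t := by
  obtain ⟨ht0, ht1, s, hs0, hs1, hX⟩ := h
  refine ⟨ht0, ht1, 1 - s, by linarith, by linarith, ?_⟩
  rw [hX]
  simp only [segPt, Prod.mk.injEq]
  constructor <;> ring

lemma CrossesAt.orient_eq_zero {a b c d : ZMod n} {t : ℝ} (h : CrossesAt n a b c d t) :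
    (1 - t) * orient (vtx n c) (vtx n d) (vtx n a) +
      t * orient (vtx n c) (vtx n d) (vtx n b) = 0 := by
  obtain ⟨-, -, s, -, -, hX⟩ := h
  rw [← orient_segPt, hX, orient_segPt_self]

variable [NeZero n]

lemma CrossesAt.left_ne {a b c d : ZMod n} {t : ℝ} (h : CrossesAt n a b c d t) (hab : a ≠ b)
    (hcd : c ≠ d) (hne : s(c, d) ≠ s(a, b)) : c ≠ a ∧ c ≠ b := by
  have e := h.orient_eq_zero
  obtain ⟨ht0, ht1, -⟩ := h
  constructor
  · rintro rfl
    rw [orient_self₁₃, mul_zero, zero_add, mul_eq_zero] at e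
    refine orient_vtx_ne_zero hcd.symm hab.symm (fun hdb => hne ?_) (e.resolve_left ht0.ne')
    rw [hdb]
  · rintro rfl
    rw [orient_self₁₃, mul_zero, add_zero, mul_eq_zero] at e
    refine orient_vtx_ne_zero hcd.symm hab (fun hda => hne ?_) (e.resolve_left (by linarith))
    rw [hda, Sym2.eq_swap]

lemma Crosses.of_crossesAt {a b c d : ZMod n} {t : ℝ} (hab : a ≠ b) (hcd : c ≠ d)
    (hne : s(c, d) ≠ s(a, b)) (h : CrossesAt n a b c d t) : Crosses n a b c d := by
  obtain ⟨hca, hcb⟩ := h.left_ne hab hcd hne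
  obtain ⟨-, -, s, hs0, hs1, hX⟩ := h
  have e : (1 - s) * orient (vtx n a) (vtx n b) (vtx n c) +
      s * orient (vtx n a) (vtx n b) (vtx n d) = 0 := by
    rw [← orient_segPt, ← hX, orient_segPt_self]
  rcases (orient_vtx_ne_zero hab.symm hca hcb.symm).lt_or_gt with hc | hc
  · have hd : 0 < orient (vtx n a) (vtx n b) (vtx n d) := by nlinarith
    obtain ⟨hc1, hc2⟩ := orient_vtx_neg_iff.mp hc
    exact Or.inl ⟨hc1, hc2, (orient_vtx_pos_iff.mp hd).2⟩
  · have hd : orient (vtx n a) (vtx n b) (vtx n d) < 0 := by nlinarith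
    obtain ⟨hd1, hd2⟩ := orient_vtx_neg_iff.mp hd
    exact Or.inr ⟨hd1, hd2, (orient_vtx_pos_iff.mp hc).2⟩

lemma CyclicallyOrdered.exists_crossesAt {a b c d : ZMod n}
    (h : CyclicallyOrdered n a c b d) : ∃ t, CrossesAt n a b c d t := by
  obtain ⟨hb', hbd', hda'⟩ := h.rotate
  obtain ⟨hc, hcb, hbd⟩ := h
  have X1 : orient (vtx n a) (vtx n b) (vtx n c) < 0 := orient_vtx_neg hc hcb
  have X2 : 0 < orient (vtx n a) (vtx n b) (vtx n d) := orient_vtx_pos (hc.trans hcb) hbd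
  have Y1 : 0 < orient (vtx n c) (vtx n d) (vtx n a) := orient_vtx_pos (hb'.trans hbd') hda'
  have Y2 : orient (vtx n c) (vtx n d) (vtx n b) < 0 := orient_vtx_neg hb' hbd'
  set A := vtx n a
  set B := vtx n b
  set C := vtx n c
  set D := vtx n d
  have hΔ : orient C D A - orient C D B = orient A B D - orient A B C := by
    simp only [orient]; ring
  have hpos : 0 < orient C D A - orient C D B := by linarith
  refine ⟨orient C D A / (orient C D A - orient C D B), div_pos Y1 hpos,
    (div_lt_one hpos).mpr (by linarith), -orient A B C / (orient C D A - orient C D B),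
    div_pos (by linarith) hpos, (div_lt_one hpos).mpr (by linarith), ?_⟩
  simp only [segPt, Prod.mk.injEq]
  constructor <;> field_simp <;> simp only [orient] <;> ring

end Crossing

lemma convex_comb_pos_iff {a b u : ℝ} (hu0 : 0 < u) (hu1 : u < 1)
    (hab : 0 ≤ a ∧ 0 ≤ b ∨ a ≤ 0 ∧ b ≤ 0) : 0 < (1 - u) * a + u * b ↔ 0 < a + b := by
  have h1u : 0 < 1 - u := by linarith
  rcases hab with ⟨ha, hb⟩ | ⟨ha, hb⟩ <;> constructor <;> intro h
  · nlinarith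
  · rcases ha.lt_or_eq with ha | rfl <;> nlinarith
  · nlinarith
  · nlinarith

section CrossingOrder

variable {n : ℕ} [NeZero n]

lemma orient_vtx_sameSide {x' y' x y : ZMod n} (h : ¬ Crosses n x' y' x y) :
    0 ≤ orient (vtx n x') (vtx n y') (vtx n x) ∧ 0 ≤ orient (vtx n x') (vtx n y') (vtx n y) ∨
      orient (vtx n x') (vtx n y') (vtx n x) ≤ 0 ∧
        orient (vtx n x') (vtx n y') (vtx n y) ≤ 0 := by
  have hzero : ∀ z, relPos n x' z = 0 ∨ relPos n x' z = relPos n x' y' →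
      orient (vtx n x') (vtx n y') (vtx n z) = 0 := by
    rintro z (hz | hz)
    · rw [relPos_eq_zero_iff.mp hz, orient_self₁₃]
    · rw [relPos_injective x' hz, orient_self₂₃]
  by_cases hx : relPos n x' x = 0 ∨ relPos n x' x = relPos n x' y'
  · rw [hzero x hx]
    rcases le_total (relPos n x' y) (relPos n x' y') with hy | hy
    · exact Or.inr ⟨le_rfl, orient_vtx_nonpos hy⟩
    · exact Or.inl ⟨le_rfl, orient_vtx_nonneg hy⟩
  by_cases hy : relPos n x' y = 0 ∨ relPos n x' y = relPos n x' y'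
  · rw [hzero y hy]
    rcases le_total (relPos n x' x) (relPos n x' y') with hx | hx
    · exact Or.inr ⟨orient_vtx_nonpos hx, le_rfl⟩
    · exact Or.inl ⟨orient_vtx_nonneg hx, le_rfl⟩
  rcases le_total (relPos n x' x) (relPos n x' y') with hx' | hx' <;>
    rcases le_total (relPos n x' y) (relPos n x' y') with hy' | hy'
  · exact Or.inr ⟨orient_vtx_nonpos hx', orient_vtx_nonpos hy'⟩
  · exact (h (Or.inl ⟨by omega, by omega, by omega⟩)).elim
  · exact (h (Or.inr ⟨by omega, by omega, by omega⟩)).elim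
  · exact Or.inl ⟨orient_vtx_nonneg hx', orient_vtx_nonneg hy'⟩

/-- The segment from `p` to `b` meets `{x, y}` before `{x', y'}` iff `{x, y}` lies on the side
of `p`. -/
lemma CrossesAt.lt_iff {p b x y x' y' : ZMod n} {t t' : ℝ}
    (h : CrossesAt n p b x y t) (h' : CrossesAt n p b x' y' t')
    (hp : 0 < orient (vtx n x') (vtx n y') (vtx n p))
    (hb : orient (vtx n x') (vtx n y') (vtx n b) < 0) (hnc : ¬ Crosses n x' y' x y) :
    t < t' ↔ 0 < orient (vtx n x') (vtx n y') (vtx n x) +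
      orient (vtx n x') (vtx n y') (vtx n y) := by
  obtain ⟨-, -, u, hu0, hu1, hX⟩ := h
  obtain ⟨-, -, v, -, -, hX'⟩ := h'
  have key := orient_segPt_sub (vtx n x') (vtx n y') (vtx n p) (vtx n b) t t'
  rw [hX', orient_segPt_self, sub_zero, hX, orient_segPt] at key
  rw [← convex_comb_pos_iff hu0 hu1 (orient_vtx_sameSide hnc), key,
    mul_pos_iff_of_pos_right (by linarith), sub_pos]

end CrossingOrder

section TPath

variable {n : ℕ}

lemma List.getD_cons_of_ne_zero {α : Type*} (a q d : α) (l : List α) {i : ℕ} (hi : i ≠ 0) :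
    (q :: l).getD i d = (a :: l).getD i d := by
  cases i with
  | zero => exact absurd rfl hi
  | succ k => simp

lemma IsTPath.cons_tail {D : Set (Sym2 (ZMod n))} {p q b : ZMod n} {l : List (ZMod n)}
    (hl : IsTPath n D p b l) (hq : ∀ k, 1 ≤ k → k < l.length → l.getD k 0 ≠ q)
    (hfirst : ∀ c d, s(c, d) ∈ D → ¬ Crosses n q (l.getD 1 0) c d) (T : ℕ → ℝ)
    (hT : ∀ i, Odd i → i + 1 < l.length →
      CrossesAt n q b (l.getD i 0) (l.getD (i + 1) 0) (T i))
    (hTmono : ∀ i j, Odd i → Odd j → i < j → j + 1 < l.length → T i < T j) :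
    IsTPath n D q b (q :: l.tail) := by
  obtain ⟨hlen, -, hlast, -, hadj, hsteps, hnc, hD, -⟩ := hl
  obtain ⟨a, l, rfl⟩ : ∃ a l', l = a :: l' := by
    cases l with
    | nil => simp at hlen
    | cons a l => exact ⟨a, l, rfl⟩
  have hget := fun i (hi : i ≠ 0) => List.getD_cons_of_ne_zero a q (0 : ZMod n) l hi
  have hodd : ∀ i, Odd i → i ≠ 0 := fun i hi h => by simp [h] at hi
  simp only [List.tail_cons, List.length_cons] at *
  refine ⟨hlen, rfl, ?_, fun _ _ => trivial, ?_, ?_, ?_, ?_, T, ?_, hTmono⟩ <;>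
    simp only [List.length_cons]
  · rwa [hget _ (by omega)]
  · rintro (_ | i) hi
    · rw [hget 1 one_ne_zero]
      exact (hq 1 le_rfl (by omega)).symm
    · rw [hget _ (by omega), hget _ (by omega)]
      exact hadj _ hi
  · rintro (_ | i) j hij hj
    · rw [hget j (by omega), hget (j + 1) (by omega), hget 1 one_ne_zero, Ne, Sym2.eq_iff]
      rintro (⟨h, -⟩ | ⟨h, -⟩)
      · exact hq j (by omega) (by omega) h.symm
      · exact hq (j + 1) (by omega) (by omega) h.symm
    · rw [hget _ (by omega), hget _ (by omega), hget j (by omega), hget (j + 1) (by omega)]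
      exact hsteps _ _ hij hj
  · rintro (_ | i) hi c d hcd
    · rw [hget 1 one_ne_zero]
      exact hfirst c d hcd
    · rw [hget _ (by omega), hget _ (by omega)]
      exact hnc _ hi c d hcd
  · intro i hi hil
    rw [hget i (hodd i hi), hget (i + 1) (by omega)]
    exact hD i hi hil
  · intro i hi hil
    rw [hget i (hodd i hi), hget (i + 1) (by omega)]
    exact hT i hi hil

lemma pathWeight_cons_tail {K : Type*} [CommGroup K] (f : ZMod n → ZMod n → K) (q : ZMod n)
    {l : List (ZMod n)} (hl : 2 ≤ l.length) :
    pathWeight n f (q :: l.tail) =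
      f q (l.getD 1 0) / f (l.getD 0 0) (l.getD 1 0) * pathWeight n f l := by
  obtain ⟨a, l, rfl⟩ : ∃ a l', l = a :: l' := by
    cases l with
    | nil => simp at hl
    | cons a l => exact ⟨a, l, rfl⟩
  have hget := fun i (hi : i ≠ 0) => List.getD_cons_of_ne_zero a q (0 : ZMod n) l hi
  simp only [pathWeight, List.tail_cons, List.length_cons] at hl ⊢
  set g : ZMod n → ℕ → K := fun x i => f ((x :: l).getD i 0) ((x :: l).getD (i + 1) 0)
  have hrest : ∀ i, i ≠ 0 → g q i = g a i := fun i hi => by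
    simp only [g, hget i hi, hget (i + 1) (by omega)]
  have h0 : 0 ∈ (Finset.range (l.length + 1 - 1)).filter Even := by simp; omega
  rw [← Finset.mul_prod_erase _ (g q) h0, ← Finset.mul_prod_erase _ (g a) h0,
    Finset.prod_congr rfl fun i hi => hrest i (Finset.ne_of_mem_erase hi),
    Finset.prod_congr rfl fun i hi => hrest i fun h => by simp [h] at hi]
  simp only [g, List.getD_cons_zero, zero_add, hget 1 one_ne_zero]
  rw [mul_div_assoc, mul_div_assoc, ← mul_assoc, div_mul_cancel]

lemma IsTPath.eq_cons_tail {D : Set (Sym2 (ZMod n))} {a b : ZMod n} {l : List (ZMod n)}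
    (hl : IsTPath n D a b l) : l = a :: l.tail := by
  obtain ⟨hlen, h0, -⟩ := hl
  cases l with
  | nil => simp at hlen
  | cons x l => rw [← h0]; rfl

lemma IsTPath.two_lt_length {D : Set (Sym2 (ZMod n))} {a b : ZMod n} {l : List (ZMod n)}
    (hl : IsTPath n D a b l) (h1 : l.getD 1 0 ≠ b) : 2 < l.length := by
  obtain ⟨hlen, -, hlast, -⟩ := hl
  by_contra
  rw [show l.length - 1 = 1 by omega] at hlast
  exact h1 hlast

lemma IsTPath.getD_two_ne {D : Set (Sym2 (ZMod n))} {a b c : ZMod n} {l : List (ZMod n)}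
    (hl : IsTPath n D a b l) (h1 : l.getD 1 0 = c) (hcb : c ≠ b) : l.getD 2 0 ≠ a := by
  intro h2
  refine hl.2.2.2.2.2.1 0 1 one_pos (hl.two_lt_length (h1 ▸ hcb)) ?_
  rw [hl.2.1, h1, h2, Sym2.eq_swap]

end TPath

/-- The shape, seen from `η`, of every D-step of the T-paths related by the bijection. -/
def Straddles (n : ℕ) (η ζ β x y : ZMod n) : Prop :=
  0 < relPos n η x ∧ relPos n η x < relPos n η β ∧ relPos n η β < relPos n η y ∧
    relPos n η y ≤ relPos n η ζ

lemma relPos_getD_of_straddles {n : ℕ} {η ζ β : ZMod n} {l : List (ZMod n)}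
    (hβ0 : 0 < relPos n η β) (hβ : relPos n η β ≤ relPos n η ζ)
    (hlast : l.getD (l.length - 1) 0 = β)
    (hs : ∀ i, Odd i → i + 1 < l.length → Straddles n η ζ β (l.getD i 0) (l.getD (i + 1) 0) ∨
      Straddles n η ζ β (l.getD (i + 1) 0) (l.getD i 0))
    {k : ℕ} (hk1 : 1 ≤ k) (hk : k < l.length) :
    0 < relPos n η (l.getD k 0) ∧ relPos n η (l.getD k 0) ≤ relPos n η ζ := by
  rcases eq_or_ne k (l.length - 1) with rfl | hk'
  · rw [hlast]
    exact ⟨hβ0, hβ⟩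
  rcases Nat.even_or_odd k with hke | hko
  · have := hs (k - 1) (Nat.Even.sub_odd hk1 hke odd_one) (by omega)
    rw [Nat.sub_add_cancel hk1] at this
    unfold Straddles at this
    omega
  · have := hs k hko (by omega)
    unfold Straddles at this
    omega

section Ear

variable {n : ℕ} [NeZero n]

namespace Straddles

variable {η ζ β p x y : ZMod n}

lemma orient_pos (h : Straddles n η ζ β x y)
    (hp : relPos n η p = 0 ∨ relPos n η ζ < relPos n η p) :
    0 < orient (vtx n x) (vtx n y) (vtx n p) := by
  obtain ⟨h1, h2, h3, h4⟩ := h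
  rcases hp with hp | hp
  · rw [orient_rotate]
    exact orient_vtx_pos_of_lt η (by omega) (by omega)
  · exact orient_vtx_pos_of_lt η (by omega) (by omega)

lemma orient_neg (h : Straddles n η ζ β x y) : orient (vtx n x) (vtx n y) (vtx n β) < 0 := by
  obtain ⟨h1, h2, h3, h4⟩ := h
  rw [← neg_pos, ← orient_swap]
  exact orient_vtx_pos_of_lt η h2 h3

lemma exists_crossesAt (h : Straddles n η ζ β x y)
    (hp : relPos n η p = 0 ∨ relPos n η ζ < relPos n η p) : ∃ t, CrossesAt n p β x y t := by
  obtain ⟨h1, h2, h3, h4⟩ := h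
  rcases hp with hp | hp
  · exact (cyclicallyOrdered_of_lt η (by omega) h2 h3).exists_crossesAt
  · exact (cyclicallyOrdered_of_lt η h2 h3 (by omega)).rotate.rotate.rotate.exists_crossesAt

lemma lt_iff_lt {q x' y' : ZMod n} {t t' s s' : ℝ} (h' : Straddles n η ζ β x' y')
    (hp : relPos n η p = 0 ∨ relPos n η ζ < relPos n η p)
    (hq : relPos n η q = 0 ∨ relPos n η ζ < relPos n η q) (hnc : ¬ Crosses n x' y' x y)
    (hpt : CrossesAt n p β x y t) (hpt' : CrossesAt n p β x' y' t')
    (hqs : CrossesAt n q β x y s) (hqs' : CrossesAt n q β x' y' s') : t < t' ↔ s < s' := by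
  rw [hpt.lt_iff hpt' (h'.orient_pos hp) h'.orient_neg hnc,
    hqs.lt_iff hqs' (h'.orient_pos hq) h'.orient_neg hnc]

end Straddles

lemma relPos_lt_or_lt_of_crossesAt {η ζ β p x y : ZMod n} {t : ℝ}
    (hβ : 0 < relPos n η β ∧ relPos n η β < relPos n η ζ)
    (hp : relPos n η p = 0 ∨ relPos n η ζ < relPos n η p)
    (hx : relPos n η x ≤ relPos n η ζ) (hy : relPos n η y ≤ relPos n η ζ) (hxy : x ≠ y)
    (hne : s(x, y) ≠ s(p, β)) (h : CrossesAt n p β x y t) :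
    relPos n η x < relPos n η β ∧ relPos n η β < relPos n η y ∨
      relPos n η y < relPos n η β ∧ relPos n η β < relPos n η x := by
  have hcross := Crosses.of_crossesAt (ne_of_relPos_ne (o := η) (by omega)) hxy hne h
  rcases hp with hp | hp
  · have := hcross.relPos_between η (by omega)
    omega
  · have := hcross.symm.relPos_between η (by omega)
    omega

end Ear

/-- The ear setup; the vertices of `P₂` are those at positions `≤ relPos n η ζ` seen from `η`. -/
structure EarSetup (n : ℕ) (D D₂ : Set (Sym2 (ZMod n))) (ζ η : ZMod n) : Prop where
  ne : ζ ≠ η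
  eq_insert : D = insert s(ζ, η) D₂
  not_mem : s(ζ, η) ∉ D₂
  mem_P₂ : ∀ x y, s(x, y) ∈ D₂ →
    x ≠ y ∧ relPos n η x ≤ relPos n η ζ ∧ relPos n η y ≤ relPos n η ζ
  not_crosses : ∀ a b c d, s(a, b) ∈ D → s(c, d) ∈ D → ¬ Crosses n a b c d

namespace EarSetup

section

variable {n : ℕ} {D D₂ : Set (Sym2 (ZMod n))} {ζ η x y : ZMod n}

lemma of_isDissection (hζη : ζ ≠ η) (hD : IsDissection n D) (hsplit : D = insert s(ζ, η) D₂)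
    (hdm : s(ζ, η) ∉ D₂)
    (hD₂ : IsDissectionOf n {ε : ZMod n | relPos n η ε ≤ relPos n η ζ} D₂) :
    EarSetup n D D₂ ζ η := by
  refine ⟨hζη, hsplit, hdm, fun x y h => ?_, hD.2⟩
  obtain ⟨hx, hy, hne, -⟩ := hD₂.1 x y h
  exact ⟨hne, hx, hy⟩

lemma mem_D (hE : EarSetup n D D₂ ζ η) (h : s(x, y) ∈ D) :
    s(x, y) = s(ζ, η) ∨ s(x, y) ∈ D₂ := by
  rwa [hE.eq_insert, Set.mem_insert_iff] at h

lemma relPos_le_of_mem (hE : EarSetup n D D₂ ζ η) (h : s(x, y) ∈ D) :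
    relPos n η x ≤ relPos n η ζ ∧ relPos n η y ≤ relPos n η ζ := by
  rcases hE.mem_D h with h | h
  · rcases Sym2.eq_iff.mp h with ⟨rfl, rfl⟩ | ⟨rfl, rfl⟩ <;> simp
  · exact (hE.mem_P₂ x y h).2

end

variable {n : ℕ} [NeZero n] {D D₂ : Set (Sym2 (ZMod n))} {ζ η β p q c x y w : ZMod n}
  {l : List (ZMod n)}

lemma not_crosses_first_step (hE : EarSetup n D D₂ ζ η)
    (hq : relPos n η q = 0 ∨ relPos n η ζ < relPos n η q) (h : s(x, y) ∈ D) :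
    ¬ Crosses n q ζ x y := by
  intro hc
  have := hE.relPos_le_of_mem h
  have := relPos_pos hE.ne
  rcases hq with hq | hq
  · have := hc.relPos_between η (by omega)
    omega
  · have := hc.symm.relPos_between η hq
    omega

lemma relPos_le_of_η_mem (hE : EarSetup n D D₂ ζ η) (hc : s(ζ, c) ∈ D)
    (hc0 : 0 < relPos n η c) (hw : s(η, w) ∈ D₂) : relPos n η w ≤ relPos n η c := by
  obtain ⟨-, -, hwZ⟩ := hE.mem_P₂ η w hw
  have hwζ : relPos n η w ≠ relPos n η ζ := fun h => by
    rw [relPos_injective η h, Sym2.eq_swap] at hw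
    exact hE.not_mem hw
  by_contra hlt
  have hwD : s(η, w) ∈ D := hE.eq_insert ▸ Set.mem_insert_of_mem _ hw
  exact hE.not_crosses η w ζ c hwD hc
    (Or.inr (cyclicallyOrdered_of_lt η (by rwa [relPos_self]) (by omega) (by omega)))

lemma straddles_of_mem_D₂ (hE : EarSetup n D D₂ ζ η)
    (hβ : 0 < relPos n η β ∧ relPos n η β < relPos n η ζ)
    (hp : relPos n η p = 0 ∨ relPos n η ζ < relPos n η p) (hc : s(ζ, c) ∈ D)
    (hcs : Straddles n η ζ β c ζ) (hxy : s(x, y) ∈ D₂) {t : ℝ} (h : CrossesAt n p β x y t) :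
    Straddles n η ζ β x y ∨ Straddles n η ζ β y x := by
  obtain ⟨hne, hx, hy⟩ := hE.mem_P₂ x y hxy
  obtain ⟨hc0, hcβ, -⟩ := hcs
  have hη := fun w hw => hE.relPos_le_of_η_mem (w := w) hc hc0 hw
  have hpβ : s(x, y) ≠ s(p, β) := by
    intro heq
    rw [heq] at hxy
    rcases hp with hp | hp
    · rw [relPos_eq_zero_iff.mp hp] at hxy
      have := hη β hxy
      omega
    · have := (hE.mem_P₂ p β hxy).2.1
      omega
  have hsep := relPos_lt_or_lt_of_crossesAt hβ hp hx hy hne hpβ h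
  have hx0 : relPos n η x = 0 → relPos n η y ≤ relPos n η c := fun h0 =>
    hη y (by rwa [relPos_eq_zero_iff.mp h0] at hxy)
  have hy0 : relPos n η y = 0 → relPos n η x ≤ relPos n η c := fun h0 =>
    hη x (by rwa [relPos_eq_zero_iff.mp h0, Sym2.eq_swap] at hxy)
  unfold Straddles
  omega

lemma straddles_getD_two (hE : EarSetup n D D₂ ζ η)
    (hβ : 0 < relPos n η β ∧ relPos n η β < relPos n η ζ)
    (hp : relPos n η p = 0 ∨ relPos n η ζ < relPos n η p) (hl : IsTPath n D p β l)
    (h1 : l.getD 1 0 = ζ) (h2 : l.getD 2 0 ≠ η) :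
    2 < l.length ∧ s(ζ, l.getD 2 0) ∈ D ∧ Straddles n η ζ β (l.getD 2 0) ζ := by
  have hlen3 := hl.two_lt_length (h1 ▸ ne_of_relPos_ne (o := η) (by omega))
  obtain ⟨-, -, -, -, -, -, -, hD, T, hT, -⟩ := hl
  have hcD : s(ζ, l.getD 2 0) ∈ D := h1 ▸ hD 1 odd_one hlen3
  have hcD₂ : s(ζ, l.getD 2 0) ∈ D₂ := by
    refine (hE.mem_D hcD).resolve_left fun h => ?_
    rcases Sym2.eq_iff.mp h with ⟨-, h⟩ | ⟨h, -⟩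
    · exact h2 h
    · exact hE.ne h
  obtain ⟨hne, -, hcZ⟩ := hE.mem_P₂ _ _ hcD₂
  have hpβ : s(ζ, l.getD 2 0) ≠ s(p, β) := by
    rw [Ne, Sym2.eq_iff]
    rintro (⟨rfl, -⟩ | ⟨rfl, -⟩) <;> omega
  have := relPos_lt_or_lt_of_crossesAt hβ hp le_rfl hcZ hne hpβ (h1 ▸ hT 1 odd_one hlen3)
  exact ⟨hlen3, hcD, relPos_pos h2, by omega, hβ.2, le_rfl⟩

/-- For `p ≠ η` the segment from `p` to `β` meets `{ζ, η}` before the first D-step `{ζ, c}`,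
as `η` and `p` lie on the same side of `{ζ, c}`; for `p = η` the diagonal `{ζ, η}` does not
cross `{p, β}`. -/
lemma step_ne_ζη (hE : EarSetup n D D₂ ζ η)
    (hβ : 0 < relPos n η β ∧ relPos n η β < relPos n η ζ)
    (hp : relPos n η p = 0 ∨ relPos n η ζ < relPos n η p) (hl : IsTPath n D p β l)
    (h1 : l.getD 1 0 = ζ) (h2 : l.getD 2 0 ≠ η) {i : ℕ} (hi : Odd i) (hil : i + 1 < l.length) :
    s(l.getD i 0, l.getD (i + 1) 0) ≠ s(ζ, η) := by
  obtain ⟨hlen3, hcD, hs⟩ := hE.straddles_getD_two hβ hp hl h1 h2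
  obtain ⟨-, -, -, -, hadj, -, -, hD, T, hT, hTmono⟩ := hl
  intro heq
  rcases hp with hp | hp
  · have hpβ : s(l.getD i 0, l.getD (i + 1) 0) ≠ s(p, β) := by
      rw [heq, Ne, Sym2.eq_iff]
      rintro (⟨rfl, -⟩ | ⟨rfl, -⟩) <;> omega
    have hcross := Crosses.of_crossesAt (ne_of_relPos_ne (o := η) (by omega)) (hadj i hil) hpβ
      (hT i hi hil)
    rw [relPos_eq_zero_iff.mp hp] at hcross
    rcases Sym2.eq_iff.mp heq with ⟨-, h⟩ | ⟨h, -⟩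
    · exact hcross.ne_fst.2 h
    · exact hcross.ne_fst.1 h
  · have hi1 : 1 < i := by
      refine lt_of_le_of_ne hi.pos fun h => h2 ?_
      subst h
      rw [h1] at heq
      rcases Sym2.eq_iff.mp heq with ⟨-, h⟩ | ⟨h, -⟩
      · exact h
      · exact (hE.ne h).elim
    have hnc : ¬ Crosses n (l.getD 2 0) ζ (l.getD i 0) (l.getD (i + 1) 0) :=
      hE.not_crosses _ _ _ _ (by rwa [Sym2.eq_swap]) (hD i hi hil)
    have key := (hT i hi hil).lt_iff (h1 ▸ hT 1 odd_one hlen3).swap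
      (hs.orient_pos (Or.inr hp)) hs.orient_neg hnc
    have hη := hs.orient_pos (p := η) (Or.inl (relPos_self η))
    have hsum : 0 < orient (vtx n (l.getD 2 0)) (vtx n ζ) (vtx n (l.getD i 0)) +
        orient (vtx n (l.getD 2 0)) (vtx n ζ) (vtx n (l.getD (i + 1) 0)) := by
      rcases Sym2.eq_iff.mp heq with ⟨ha, hb⟩ | ⟨ha, hb⟩ <;>
        rw [ha, hb, orient_self₂₃] <;> linarith
    exact (key.mpr hsum).not_gt (hTmono 1 i odd_one hi hi1 hil)

lemma straddles_of_isTPath (hE : EarSetup n D D₂ ζ η)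
    (hβ : 0 < relPos n η β ∧ relPos n η β < relPos n η ζ)
    (hp : relPos n η p = 0 ∨ relPos n η ζ < relPos n η p) (hl : IsTPath n D p β l)
    (h1 : l.getD 1 0 = ζ) (h2 : l.getD 2 0 ≠ η) {i : ℕ} (hi : Odd i) (hil : i + 1 < l.length) :
    Straddles n η ζ β (l.getD i 0) (l.getD (i + 1) 0) ∨
      Straddles n η ζ β (l.getD (i + 1) 0) (l.getD i 0) := by
  have hne := hE.step_ne_ζη hβ hp hl h1 h2 hi hil
  obtain ⟨-, hcD, hcs⟩ := hE.straddles_getD_two hβ hp hl h1 h2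
  obtain ⟨-, -, -, -, -, -, -, hD, T, hT, -⟩ := hl
  exact hE.straddles_of_mem_D₂ hβ hp hcD hcs ((hE.mem_D (hD i hi hil)).resolve_left hne)
    (hT i hi hil)

lemma isTPath_cons_tail (hE : EarSetup n D D₂ ζ η)
    (hβ : 0 < relPos n η β ∧ relPos n η β < relPos n η ζ)
    (hp : relPos n η p = 0 ∨ relPos n η ζ < relPos n η p)
    (hq : relPos n η q = 0 ∨ relPos n η ζ < relPos n η q) (hl : IsTPath n D p β l)
    (h1 : l.getD 1 0 = ζ) (h2 : l.getD 2 0 ≠ η) : IsTPath n D q β (q :: l.tail) := by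
  have hs := fun i hi hil => hE.straddles_of_isTPath hβ hp hl h1 h2 (i := i) hi hil
  have hex : ∀ i, ∃ t, Odd i → i + 1 < l.length →
      CrossesAt n q β (l.getD i 0) (l.getD (i + 1) 0) t := by
    intro i
    by_cases h : Odd i ∧ i + 1 < l.length
    · rcases hs i h.1 h.2 with h' | h'
      · obtain ⟨t, ht⟩ := h'.exists_crossesAt hq
        exact ⟨t, fun _ _ => ht⟩
      · obtain ⟨t, ht⟩ := h'.exists_crossesAt hq
        exact ⟨t, fun _ _ => ht.swap⟩
    · exact ⟨0, fun hi hil => (h ⟨hi, hil⟩).elim⟩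
  choose T' hT' using hex
  refine hl.cons_tail (fun k hk1 hk => ?_) (h1 ▸ fun c d hcd => hE.not_crosses_first_step hq hcd)
    T' hT' (fun i j hi hj hij hjl => ?_)
  · have := relPos_getD_of_straddles hβ.1 hβ.2.le hl.2.2.1 hs hk1 hk
    exact ne_of_relPos_ne (o := η) (by omega)
  · obtain ⟨-, -, -, -, -, -, -, hD, T, hT, hTmono⟩ := hl
    have hil : i + 1 < l.length := by omega
    have hnc := hE.not_crosses _ _ _ _ (hD j hj hjl) (hD i hi hil)
    rcases hs j hj hjl with h' | h'
    · exact (h'.lt_iff_lt hp hq hnc (hT i hi hil) (hT j hj hjl) (hT' i hi hil)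
        (hT' j hj hjl)).mp (hTmono i j hi hj hij hjl)
    · exact (h'.lt_iff_lt hp hq (mt Crosses.symm hnc) (hT i hi hil) (hT j hj hjl).swap
        (hT' i hi hil) (hT' j hj hjl).swap).mp (hTmono i j hi hj hij hjl)

end EarSetup

theorem ear_bijection_R_general
    (n : ℕ) (hn : 3 ≤ n) {K : Type*} [PaperSemifield K]
    (ζ η : ZMod n) (hζη : IsInternalDiag n ζ η)
    (D D₂ : Set (Sym2 (ZMod n)))
    (hD : IsDissection n D)
    (hsplit : D = insert s(ζ, η) D₂) (hdm : s(ζ, η) ∉ D₂)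
    (hD₂ : IsDissectionOf n {ε : ZMod n | relPos n η ε ≤ relPos n η ζ} D₂)
    (α β : ZMod n)
    (hα : 0 < relPos n ζ α ∧ relPos n ζ α < relPos n ζ η)
    (hβ : 0 < relPos n η β ∧ relPos n η β < relPos n η ζ)
    (f : ZMod n → ZMod n → K) :
    Set.BijOn (fun l : List (ZMod n) => η :: l.tail)
      {l : List (ZMod n) | IsTPath n D α β l ∧ l.getD 1 0 = ζ ∧ l.getD 2 0 ≠ η}
      {l : List (ZMod n) | IsTPath n D η β l ∧ l.getD 1 0 = ζ} ∧
    ∀ l : List (ZMod n), IsTPath n D α β l → l.getD 1 0 = ζ → l.getD 2 0 ≠ η →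
      f α ζ / f η ζ * pathWeight n f (η :: l.tail) = pathWeight n f l := by
  have : NeZero n := ⟨by omega⟩
  have hE := EarSetup.of_isDissection hζη.1 hD hsplit hdm hD₂
  have hη : relPos n η η = 0 ∨ relPos n η ζ < relPos n η η := Or.inl (relPos_self η)
  have hα' : relPos n η α = 0 ∨ relPos n η ζ < relPos n η α :=
    Or.inr (relPos_lt_of_between hα.1 hα.2)
  refine ⟨⟨?_, ?_, ?_⟩, ?_⟩
  · rintro l ⟨hl, h1, h2⟩
    refine ⟨hE.isTPath_cons_tail hβ hα' hη hl h1 h2, ?_⟩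
    rw [hl.eq_cons_tail] at h1
    simpa using h1
  · rintro l ⟨hl, -⟩ l' ⟨hl', -⟩ h
    rw [hl.eq_cons_tail, hl'.eq_cons_tail, List.cons_injective h]
  · rintro ρ ⟨hρ, h1⟩
    have h2 := hρ.getD_two_ne h1 (ne_of_relPos_ne (o := η) (by omega))
    refine ⟨α :: ρ.tail, ⟨hE.isTPath_cons_tail hβ hη hα' hρ h1 h2, ?_, ?_⟩,
      hρ.eq_cons_tail.symm⟩
    · rw [hρ.eq_cons_tail] at h1
      simpa using h1
    · rw [hρ.eq_cons_tail] at h2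
      simpa using h2
  · intro l hl h1 _
    rw [pathWeight_cons_tail f η hl.1, hl.2.1, h1, ← mul_assoc, div_mul_div_cancel, div_self',
      one_mul]

/-- **Ear setup.**  `D = {d} ⊔ D₂` is a dissection of the `n`-gon, where `d = {ζ,η}`
divides the polygon into subpolygons `P₁` (vertex set `V₁`, an ear, with interior
`U₁ = {ε : ζ < ε < η}`) and `P₂` (vertex set `V₂`, with interior `U₂ = {ε : η < ε < ζ}`),
and `D₂` is a dissection of `P₂`.  Let `α ∈ U₁`, `β ∈ U₂`, and let `f : diag(P) → K` be
any map.  The map `R : (α, ζ, π₃, …, π_p) ↦ (η, ζ, π₃, …, π_p)` is a bijection from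
`{π ∈ T(α→β) : π₂ = ζ, π₃ ≠ η}` to `{ρ ∈ T(η→β) : ρ₂ = ζ}`, and
`(f(α,ζ)/f(η,ζ)) · f(R(π)) = f(π)` for every `π` in its domain. -/
theorem ear_bijection_R
    (n : ℕ) (hn : 3 ≤ n) {K : Type*} [PaperSemifield K]
    (ζ η : ZMod n) (hζη : IsInternalDiag n ζ η)
    (D D₂ : Set (Sym2 (ZMod n)))
    (hD : IsDissection n D)
    (hsplit : D = insert s(ζ, η) D₂) (hdm : s(ζ, η) ∉ D₂)
    (hD₂ : IsDissectionOf n {ε : ZMod n | relPos n η ε ≤ relPos n η ζ} D₂)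
    (α β : ZMod n)
    (hα : 0 < relPos n ζ α ∧ relPos n ζ α < relPos n ζ η)
    (hβ : 0 < relPos n η β ∧ relPos n η β < relPos n η ζ)
    (f : ZMod n → ZMod n → K) (hf : SymmOn n Set.univ f) :
    Set.BijOn (fun l : List (ZMod n) => η :: l.tail)
      {l : List (ZMod n) | IsTPath n D α β l ∧ l.getD 1 0 = ζ ∧ l.getD 2 0 ≠ η}
      {l : List (ZMod n) | IsTPath n D η β l ∧ l.getD 1 0 = ζ} ∧
    ∀ l : List (ZMod n), IsTPath n D α β l → l.getD 1 0 = ζ → l.getD 2 0 ≠ η →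
      f α ζ / f η ζ * pathWeight n f (η :: l.tail) = pathWeight n f l :=
  ear_bijection_R_general n hn ζ η hζη D D₂ hD hsplit hdm hD₂ α β hα hβ f
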